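/- Let f be a linear pseudo-Boolean function with sorted positive weights and fix 0 ≤ i < n. Let x ∈ {0,1}ⁿ satisfy f(a_i) ≤ f(x) < f(a_{i+1}). Then x contains at least one zero, the leftmost zero of x is at some position k ≤ i+1, and the bit string h(x) obtained from x by flipping this leftmost zero to a one satisfies f(h(x)) ≥ f(a_{i+1}). -/
import Mathlib


/-- `fval w x` is the value of the linear pseudo-Boolean function with weights `w`
on the bit string `x`. -/
noncomputable def fval {n : ℕ} (w : Fin n → ℝ) (x : Fin n → Bool) : ℝ :=
  ∑ j, w j * (if x j then 1 else 0)

/-- `fA w i = f(a_i) = Σ_{j=1}^i w_j`. -/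
noncomputable def fA {n : ℕ} (w : Fin n → ℝ) (i : ℕ) : ℝ :=
  ∑ j, w j * (if (j : ℕ) < i then 1 else 0)

lemma fval_update {n : ℕ} (w : Fin n → ℝ) (x : Fin n → Bool) (k : Fin n)
    (hk : x k = false) :
    fval w (Function.update x k true) = fval w x + w k := by
  have h : ∀ j : Fin n, w j * (if Function.update x k true j then 1 else 0)
      = w j * (if x j then 1 else 0) + (if j = k then w k else 0) := by
    intro j
    by_cases h : j = k
    · subst h; simp [hk]
    · simp [Function.update_of_ne h, h]
  simp only [fval, h, Finset.sum_add_distrib, Finset.sum_ite_eq' Finset.univ k]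
  simp

lemma fA_succ {n : ℕ} (w : Fin n → ℝ) (i : ℕ) (hi : i < n) :
    fA w (i + 1) = fA w i + w ⟨i, hi⟩ := by
  have h : ∀ j : Fin n, w j * (if (j : ℕ) < i + 1 then 1 else 0)
      = w j * (if (j : ℕ) < i then 1 else 0) + (if j = ⟨i, hi⟩ then w ⟨i, hi⟩ else 0) := by
    intro j
    by_cases h : j = ⟨i, hi⟩
    · subst h; simp
    · have : (j : ℕ) ≠ i := fun hji => h (Fin.ext hji)
      by_cases h2 : (j : ℕ) < i
      · simp [h, h2, Nat.lt_succ_of_lt h2]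
      · have : ¬ (j : ℕ) < i + 1 := by omega
        simp [h, h2, this]
  simp only [fA, h, Finset.sum_add_distrib, Finset.sum_ite_eq' Finset.univ]
  simp

/-- If `f(a_i) ≤ f(x) < f(a_{i+1})` for a linear function with sorted positive weights,
then `x` contains a zero, its leftmost zero is at a (1-indexed) position at most `i+1`
(0-indexed: `k ≤ i`), and flipping it to a one yields a solution of value at least
`f(a_{i+1})`. -/
theorem stmt_13 (n : ℕ) (w : Fin n → ℝ) (hwpos : ∀ j, 0 < w j)
    (hwsorted : ∀ j k : Fin n, j ≤ k → w k ≤ w j)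
    (i : ℕ) (hi : i < n) (x : Fin n → Bool)
    (hlow : fA w i ≤ fval w x) (hhigh : fval w x < fA w (i + 1)) :
    (∃ j, x j = false) ∧
      ∀ k : Fin n, x k = false → (∀ j : Fin n, j < k → x j = true) →
        (k : ℕ) ≤ i ∧ fA w (i + 1) ≤ fval w (Function.update x k true) := by
  constructor
  · by_contra h
    push_neg at h
    have hall : ∀ j, x j = true := by
      intro j; cases hxj : x j
      · exact absurd hxj (h j)
      · rfl
    have : fA w (i + 1) ≤ fval w x := by
      apply Finset.sum_le_sum
      intro j _
      have := (hwpos j).le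
      simp [hall j]
      split <;> simp [this]
    linarith
  · intro k hk hleft
    have hki : (k : ℕ) ≤ i := by
      by_contra h
      push_neg at h
      have : fA w (i + 1) ≤ fval w x := by
        apply Finset.sum_le_sum
        intro j _
        by_cases hj : (j : ℕ) < i + 1
        · have : j < k := by
            apply Fin.lt_def.mpr; omega
          simp [hj, hleft j this]
        · simp [hj]
          have := (hwpos j).le
          split <;> simp [this]
      linarith
    refine ⟨hki, ?_⟩
    rw [fval_update w x k hk, fA_succ w i hi]
    have hw : w ⟨i, hi⟩ ≤ w k := hwsorted k ⟨i, hi⟩ (by simpa [Fin.le_def] using hki)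
    linarith
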